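/- arXiv:1806.01302 — 6 statements merged into one kernel-verified Lean document; each statement's English description precedes it below -/
import Mathlib

section
/- Let p be an odd prime and q = (p-1)/2. The restriction of the map u to the lower half S_p^ℓ = {1,2,...,q} is a bijection of S_p^ℓ onto itself. -/
/-- The map `u` on `S_p = {1,...,p-1}`. -/
def u (p x : ℕ) : ℕ := if x % 2 = 0 then x / 2 else (p - x) / 2

theorem stmt_9 (p : ℕ) (hp : p.Prime) (hodd : Odd p)
    (q : ℕ) (hq : q = (p - 1) / 2) :
    Set.BijOn (u p) (Set.Icc 1 q) (Set.Icc 1 q) := by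
  obtain ⟨k, hk⟩ := hodd
  have hp2 : p ≥ 3 := by have := hp.two_le; omega
  refine ⟨?_, ?_, ?_⟩
  · intro x hx
    simp only [Set.mem_Icc] at *
    unfold u
    split <;> omega
  · intro x hx y hy hxy
    simp only [Set.mem_Icc] at hx hy
    unfold u at hxy
    split at hxy <;> split at hxy <;> omega
  · intro y hy
    simp only [Set.mem_Icc] at hy
    by_cases h : 2 * y ≤ q
    · exact ⟨2 * y, by simp only [Set.mem_Icc]; omega, by unfold u; split <;> omega⟩
    · exact ⟨p - 2 * y, by simp only [Set.mem_Icc]; omega, by unfold u; split <;> omega⟩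
end

section
/- Let p be an odd prime, q = (p-1)/2, and let L_p = ord_p(4) denote the multiplicative order of 4 modulo p. Then every x with 1 ≤ x ≤ q satisfies u^[L_p](x) = x, where u^[n] denotes the n-fold iterate of u. -/
theorem stmt_10 (p : ℕ) (hp : p.Prime) (hodd : Odd p)
    (q : ℕ) (hq : q = (p - 1) / 2)
    (L : ℕ) (hL : L = orderOf (4 : ZMod p))
    (x : ℕ) (hx1 : 1 ≤ x) (hx2 : x ≤ q) :
    (u p)^[L] x = x := by
  haveI : Fact p.Prime := ⟨hp⟩
  have hpm : p % 2 = 1 := Nat.odd_iff.mp hodd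
  have hp2 : 2 ≤ p := hp.two_le
  have hqp : 2 * q + 1 = p := by omega
  -- one-step lemma
  have step : ∀ y : ℕ, 1 ≤ y → y ≤ q →
      (1 ≤ u p y ∧ u p y ≤ q) ∧
      ((2 : ZMod p) * (u p y : ZMod p) = (y : ZMod p) ∨
       (2 : ZMod p) * (u p y : ZMod p) = -(y : ZMod p)) := by
    intro y hy1 hy2
    unfold u
    rcases Nat.even_or_odd y with he | ho
    · have h2 : y % 2 = 0 := Nat.even_iff.mp he
      rw [if_pos h2]
      have hdiv : 2 * (y / 2) = y := by omega
      refine ⟨⟨by omega, by omega⟩, Or.inl ?_⟩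
      have := congrArg (Nat.cast : ℕ → ZMod p) hdiv
      push_cast at this
      exact this
    · have h2 : y % 2 = 1 := Nat.odd_iff.mp ho
      rw [if_neg (by omega : ¬ y % 2 = 0)]
      have hyp : y < p := by omega
      have hdiv : 2 * ((p - y) / 2) = p - y := by omega
      refine ⟨⟨by omega, by omega⟩, Or.inr ?_⟩
      have hcast : ((p - y : ℕ) : ZMod p) = -(y : ZMod p) := by
        rw [Nat.cast_sub hyp.le, ZMod.natCast_self, zero_sub]
      have := congrArg (Nat.cast : ℕ → ZMod p) hdiv
      push_cast at this
      rw [this, hcast]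
  -- invariant under iteration
  have inv : ∀ n : ℕ, (1 ≤ (u p)^[n] x ∧ (u p)^[n] x ≤ q) ∧
      ((2 : ZMod p)^n * ((u p)^[n] x : ZMod p) = (x : ZMod p) ∨
       (2 : ZMod p)^n * ((u p)^[n] x : ZMod p) = -(x : ZMod p)) := by
    intro n
    induction n with
    | zero => exact ⟨⟨hx1, hx2⟩, Or.inl (by simp)⟩
    | succ n ih =>
      obtain ⟨⟨h1, h2⟩, hc⟩ := ih
      rw [Function.iterate_succ_apply']
      obtain ⟨⟨g1, g2⟩, gc⟩ := step _ h1 h2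
      refine ⟨⟨g1, g2⟩, ?_⟩
      rcases gc with g | g <;> rcases hc with h | h
      · left; rw [pow_succ, mul_assoc, g, h]
      · right; rw [pow_succ, mul_assoc, g, h]
      · right; rw [pow_succ, mul_assoc, g, mul_neg, h]
      · left; rw [pow_succ, mul_assoc, g, mul_neg, h, neg_neg]
  obtain ⟨⟨hy1, hy2⟩, hc⟩ := inv L
  set y := (u p)^[L] x with hy
  -- 2^L = ±1
  have h4 : (4 : ZMod p)^L = 1 := by rw [hL]; exact pow_orderOf_eq_one _
  have h2L : (2 : ZMod p)^L * (2 : ZMod p)^L = 1 := by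
    have h42 : (4 : ZMod p) = 2 * 2 := by norm_num
    rw [← mul_pow, ← h42, h4]
  have hpm1 : (2 : ZMod p)^L = 1 ∨ (2 : ZMod p)^L = -1 :=
    mul_self_eq_one_iff.mp h2L
  have hxlt : x < p := by omega
  have hylt : y < p := by omega
  -- conclude (y : ZMod p) = x or = -x
  have key : (y : ZMod p) = (x : ZMod p) ∨ (y : ZMod p) = -(x : ZMod p) := by
    rcases hpm1 with e | e <;> rcases hc with h | h <;> rw [e] at h
    · exact Or.inl (by rwa [one_mul] at h)
    · exact Or.inr (by rwa [one_mul] at h)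
    · refine Or.inr ?_
      rw [neg_one_mul] at h
      rw [← h, neg_neg]
    · refine Or.inl ?_
      rw [neg_one_mul] at h
      exact neg_injective h
  rcases key with h | h
  · have := congrArg ZMod.val h
    rwa [ZMod.val_natCast_of_lt hylt, ZMod.val_natCast_of_lt hxlt] at this
  · exfalso
    have hz : ((y + x : ℕ) : ZMod p) = 0 := by push_cast; rw [h]; ring
    have hdvd : p ∣ y + x := (ZMod.natCast_eq_zero_iff _ _).mp hz
    have := Nat.le_of_dvd (by omega) hdvd
    omega
end

section
/- Let p be an odd prime and q = (p-1)/2. For every x with 1 ≤ x ≤ q, the minimal period of x under iteration of the map u (i.e., the least n ≥ 1 with u^[n](x) = x) equals ord_p(4), the multiplicative order of 4 modulo p. -/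
lemma u_key (p : ℕ) (hp : p.Prime) (q : ℕ) (hq : 2 * q + 1 = p)
    (x : ℕ) (hx1 : 1 ≤ x) (hx2 : x ≤ q) (k : ℕ) :
    (1 ≤ (u p)^[k] x ∧ (u p)^[k] x ≤ q) ∧
    ∃ e : ZMod p, (e = 1 ∨ e = -1) ∧ (2:ZMod p)^k * ((u p)^[k] x : ℕ) = e * x := by
  induction k with
  | zero => exact ⟨⟨hx1, hx2⟩, 1, Or.inl rfl, by simp⟩
  | succ k ih =>
    obtain ⟨⟨hy1, hy2⟩, e, he, heq⟩ := ih
    set y := (u p)^[k] x with hy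
    have hiter : (u p)^[k+1] x = u p y := by
      rw [Function.iterate_succ_apply']
    have hq1 : 1 ≤ q := le_trans hx1 hx2
    rcases Nat.even_or_odd y with hev | hod
    · have hy2' : y % 2 = 0 := Nat.even_iff.mp hev
      have hu : u p y = y / 2 := by simp [u, hy2']
      obtain ⟨c, hc⟩ := hev
      have hc' : y = 2 * c := by omega
      refine ⟨⟨?_, ?_⟩, e, he, ?_⟩
      · rw [hiter, hu]; omega
      · rw [hiter, hu]; omega
      · rw [hiter, hu, hc']
        have : (2:ℕ) * c / 2 = c := by omega
        rw [this]
        push_cast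
        rw [pow_succ]
        rw [hc'] at heq
        push_cast at heq
        ring_nf
        ring_nf at heq
        linear_combination heq
    · have hy2' : y % 2 = 1 := Nat.odd_iff.mp hod
      have hu : u p y = (p - y) / 2 := by simp [u, hy2']
      have hple : y ≤ p := by omega
      have hev2 : ∃ c, p - y = 2 * c := by
        refine ⟨(p - y)/2, ?_⟩
        omega
      obtain ⟨c, hc⟩ := hev2
      have hdiv : (p - y) / 2 = c := by omega
      refine ⟨⟨?_, ?_⟩, -e, ?_, ?_⟩
      · rw [hiter, hu]; omega
      · rw [hiter, hu]; omega
      · rcases he with h | h <;> simp [h]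
      · rw [hiter, hu, hdiv]
        have hcast : ((c : ℕ) : ZMod p) * 2 = -(y : ZMod p) := by
          have : ((2 * c : ℕ) : ZMod p) = ((p - y : ℕ) : ZMod p) := by rw [hc]
          rw [Nat.cast_sub hple] at this
          push_cast at this
          simp at this
          linear_combination this
        rw [pow_succ]
        calc (2:ZMod p)^k * 2 * (c:ℕ) = (2:ZMod p)^k * ((c:ℕ) * 2) := by ring
        _ = (2:ZMod p)^k * (-(y:ZMod p)) := by rw [hcast]
        _ = -(e * x) := by rw [← heq]; ring
        _ = -e * x := by ring

theorem stmt_11 (p : ℕ) (hp : p.Prime) (hodd : Odd p)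
    (q : ℕ) (hq : q = (p - 1) / 2)
    (x : ℕ) (hx1 : 1 ≤ x) (hx2 : x ≤ q)
    (n : ℕ) (hn1 : 1 ≤ n) (hnx : (u p)^[n] x = x)
    (hmin : ∀ m, 1 ≤ m → (u p)^[m] x = x → n ≤ m) :
    n = orderOf (4 : ZMod p) := by
  haveI := Fact.mk hp
  have hp2 : p ≠ 2 := by rintro rfl; exact (Nat.not_odd_iff_even.mpr (by norm_num)) hodd
  have hp3 : 3 ≤ p := by
    have := hp.two_le; omega
  obtain ⟨t, ht⟩ := hodd
  have hqp : 2 * q + 1 = p := by omega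
  have hxp : x < p := by omega
  have hx0 : (x : ZMod p) ≠ 0 := by
    intro h
    have hd := (ZMod.natCast_eq_zero_iff x p).mp h
    have := Nat.le_of_dvd (by omega) hd
    omega
  -- 4^n = 1
  have key := u_key p hp q hqp x hx1 hx2
  have h4n : (4 : ZMod p)^n = 1 := by
    obtain ⟨-, e, he, heq⟩ := key n
    rw [hnx] at heq
    have h2n : (2:ZMod p)^n = e := mul_right_cancel₀ hx0 heq
    have : (4:ZMod p) = 2^2 := by norm_num
    rw [this, ← pow_mul, mul_comm, pow_mul, h2n]
    rcases he with h | h <;> simp [h]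
  have hdvd : orderOf (4 : ZMod p) ∣ n := orderOf_dvd_of_pow_eq_one h4n
  have hord_pos : 0 < orderOf (4 : ZMod p) := by
    have h4ne : (4 : ZMod p) ≠ 0 := by
      intro h
      have hdv : (p : ℕ) ∣ 4 := (ZMod.natCast_eq_zero_iff 4 p).mp (by exact_mod_cast h)
      have hle : p ≤ 4 := Nat.le_of_dvd (by norm_num) hdv
      interval_cases p <;> revert hdv hp <;> decide
    have : IsOfFinOrder (4 : ZMod p) :=
      isOfFinOrder_iff_pow_eq_one.mpr ⟨p - 1, by omega, ZMod.pow_card_sub_one_eq_one h4ne⟩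
    exact this.orderOf_pos
  set d := orderOf (4 : ZMod p) with hd
  -- u^[d] x = x
  have h4d : (4 : ZMod p)^d = 1 := pow_orderOf_eq_one _
  have h2d : (2:ZMod p)^d = 1 ∨ (2:ZMod p)^d = -1 := by
    have : ((2:ZMod p)^d)^2 = 1 := by
      rw [← pow_mul, mul_comm, pow_mul]
      norm_num
      exact h4d
    rw [sq] at this
    exact mul_self_eq_one_iff.mp this
  obtain ⟨⟨hy1, hy2⟩, e, he, heq⟩ := key d
  set y := (u p)^[d] x with hyd
  have hyx : (y : ZMod p) = e * x ∨ (y : ZMod p) = -(e * x) := by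
    rcases h2d with h | h
    · left; rw [h, one_mul] at heq; exact heq
    · right; rw [h] at heq; linear_combination -heq
  have hyeq : y = x := by
    have hcase : (y : ZMod p) = (x : ZMod p) ∨ (y : ZMod p) = -(x : ZMod p) := by
      rcases hyx with h | h <;> rcases he with h' | h' <;> rw [h'] at h
      · left; rw [h, one_mul]
      · right; rw [h]; ring
      · right; rw [h]; ring
      · left; rw [h]; ring
    rcases hcase with h | h
    · have hm : y % p = x % p := (ZMod.natCast_eq_natCast_iff y x p).mp h
      have h1 : y % p = y := Nat.mod_eq_of_lt (by omega)
      have h2 : x % p = x := Nat.mod_eq_of_lt (by omega)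
      omega
    · exfalso
      have hsum : ((y + x : ℕ) : ZMod p) = 0 := by push_cast; rw [h]; ring
      have hdvd2 : p ∣ y + x := (ZMod.natCast_eq_zero_iff _ p).mp hsum
      have := Nat.le_of_dvd (by omega) hdvd2
      omega
  have hnd : n ≤ d := hmin d hord_pos (by rw [← hyd, hyeq])
  have hdn : d ≤ n := Nat.le_of_dvd hn1 hdvd
  omega
end

section
/- Let p be an odd prime and q = (p-1)/2. If x, y ∈ {1,2,...,q} are periodic points of u with minimal periods n ≥ 2 and k ≥ 2 respectively (i.e., n is the least positive integer with u^[n](x) = x and k is the least positive integer with u^[k](y) = y), then n = k; that is, all cycles of the graph induced by u have the same length. -/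
lemma u_step {p q : ℕ} (hp3 : 3 ≤ p) (hq : 2 * q = p - 1) {z : ℕ}
    (h1 : 1 ≤ z) (h2 : z ≤ q) :
    (1 ≤ u p z ∧ u p z ≤ q) ∧
      ((2 : ZMod p) * (u p z) = z ∨ (2 : ZMod p) * (u p z) = -z) := by
  unfold u
  split_ifs with h
  · refine ⟨⟨by omega, by omega⟩, Or.inl ?_⟩
    have hnat : 2 * (z / 2) = z := by omega
    have := congrArg (Nat.cast : ℕ → ZMod p) hnat
    push_cast at this
    exact this
  · refine ⟨⟨by omega, by omega⟩, Or.inr ?_⟩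
    have hnat : 2 * ((p - z) / 2) = p - z := by omega
    have hcast : ((2 * ((p - z) / 2) : ℕ) : ZMod p) = ((p - z : ℕ) : ZMod p) := by
      rw [hnat]
    have hpz : ((p - z : ℕ) : ZMod p) = -(z : ZMod p) := by
      have : ((p - z : ℕ) : ZMod p) + (z : ZMod p) = ((p : ℕ) : ZMod p) := by
        rw [← Nat.cast_add]
        congr 1
        omega
      rw [ZMod.natCast_self] at this
      linear_combination this
    push_cast at hcast
    rw [hpz] at hcast
    exact hcast

lemma u_iter {p q : ℕ} (hp3 : 3 ≤ p) (hq : 2 * q = p - 1) {z : ℕ}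
    (h1 : 1 ≤ z) (h2 : z ≤ q) (m : ℕ) :
    (1 ≤ (u p)^[m] z ∧ (u p)^[m] z ≤ q) ∧
      ((2 : ZMod p) ^ m * ((u p)^[m] z) = z ∨
        (2 : ZMod p) ^ m * ((u p)^[m] z) = -z) := by
  induction m with
  | zero => simp [h1, h2]
  | succ m ih =>
    obtain ⟨⟨hb1, hb2⟩, hc⟩ := ih
    obtain ⟨hb', hc'⟩ := u_step hp3 hq hb1 hb2
    rw [Function.iterate_succ_apply']
    refine ⟨hb', ?_⟩
    rw [pow_succ, mul_assoc]
    rcases hc' with h | h <;> rcases hc with hcc | hcc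
    · left; linear_combination (2:ZMod p)^m * h + hcc
    · right; linear_combination (2:ZMod p)^m * h + hcc
    · right; linear_combination (2:ZMod p)^m * h - hcc
    · left; linear_combination (2:ZMod p)^m * h - hcc

lemma cast_inj_of_le {p q a b : ℕ} (hq : 2 * q = p - 1) (hp3 : 3 ≤ p)
    (ha1 : 1 ≤ a) (ha : a ≤ q) (hb1 : 1 ≤ b) (hb : b ≤ q)
    (h : (a : ZMod p) = b) : a = b := by
  have := (ZMod.natCast_eq_natCast_iff a b p).mp h
  have h1 : a % p = b % p := this
  rw [Nat.mod_eq_of_lt (by omega), Nat.mod_eq_of_lt (by omega)] at h1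
  exact h1

lemma period_iff {p q : ℕ} (hp : p.Prime) (hp3 : 3 ≤ p) (hq : 2 * q = p - 1)
    {z : ℕ} (h1 : 1 ≤ z) (h2 : z ≤ q) (m : ℕ) :
    (u p)^[m] z = z ↔ ((2 : ZMod p) ^ m = 1 ∨ (2 : ZMod p) ^ m = -1) := by
  haveI := Fact.mk hp
  have hz0 : (z : ZMod p) ≠ 0 := by
    intro h
    have := (ZMod.natCast_eq_zero_iff z p).mp h
    have := Nat.le_of_dvd (by omega) this
    omega
  obtain ⟨⟨hw1, hw2⟩, hc⟩ := u_iter hp3 hq h1 h2 m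
  constructor
  · intro he
    rw [he] at hc
    rcases hc with h | h
    · left
      have : (2 : ZMod p) ^ m * z = 1 * z := by rw [h, one_mul]
      exact mul_right_cancel₀ hz0 this
    · right
      have : (2 : ZMod p) ^ m * z = (-1) * z := by rw [h]; ring
      exact mul_right_cancel₀ hz0 this
  · intro he
    rcases he with h | h <;> rw [h] at hc
    · rcases hc with hcc | hcc
      · rw [one_mul] at hcc
        exact cast_inj_of_le hq hp3 hw1 hw2 h1 h2 hcc
      · exfalso
        rw [one_mul] at hcc
        have h3 : (((u p)^[m] z + z : ℕ) : ZMod p) = 0 := by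
          push_cast; rw [hcc]; ring
        have := (ZMod.natCast_eq_zero_iff _ p).mp h3
        have := Nat.le_of_dvd (by omega) this
        omega
    · rcases hc with hcc | hcc
      · exfalso
        have h3 : (((u p)^[m] z + z : ℕ) : ZMod p) = 0 := by
          push_cast; linear_combination -hcc
        have := (ZMod.natCast_eq_zero_iff _ p).mp h3
        have := Nat.le_of_dvd (by omega) this
        omega
      · have h3 : ((u p)^[m] z : ZMod p) = z := by linear_combination -hcc
        exact cast_inj_of_le hq hp3 hw1 hw2 h1 h2 h3

theorem stmt_12 (p : ℕ) (hp : p.Prime) (hodd : Odd p)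
    (q : ℕ) (hq : q = (p - 1) / 2)
    (x y : ℕ) (hx : 1 ≤ x ∧ x ≤ q) (hy : 1 ≤ y ∧ y ≤ q)
    (n k : ℕ) (hn2 : 2 ≤ n) (hk2 : 2 ≤ k)
    (hnx : (u p)^[n] x = x)
    (hnmin : ∀ m, 1 ≤ m → (u p)^[m] x = x → n ≤ m)
    (hky : (u p)^[k] y = y)
    (hkmin : ∀ m, 1 ≤ m → (u p)^[m] y = y → k ≤ m) :
    n = k := by
  have hp3 : 3 ≤ p := by
    have h2le := hp.two_le
    have hne : p ≠ 2 := by rintro rfl; exact (by decide : ¬ Odd 2) hodd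
    omega
  obtain ⟨t, ht⟩ := hodd
  have hq' : 2 * q = p - 1 := by omega
  have h1 := (period_iff hp hp3 hq' hx.1 hx.2 n).mp hnx
  have h2 := (period_iff hp hp3 hq' hy.1 hy.2 k).mp hky
  have hn_le : n ≤ k := hnmin k (by omega) ((period_iff hp hp3 hq' hx.1 hx.2 k).mpr h2)
  have hk_le : k ≤ n := hkmin n (by omega) ((period_iff hp hp3 hq' hy.1 hy.2 n).mpr h1)
  omega
end

section
/- Let p be an odd prime and let L_p = ord_p(4) be the multiplicative order of 4 modulo p. Then for every x ∈ S_p = {1,2,...,p-1}, one has u^[L_p + 1](x) = u(x); that is, every vertex of the graph G_p reaches a cycle after at most one step. -/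
lemma u_range (p : ℕ) (hp3 : 3 ≤ p) (hodd : Odd p) (y : ℕ) (h1 : 1 ≤ y) (h2 : y ≤ p - 1) :
    1 ≤ u p y ∧ u p y ≤ (p - 1) / 2 := by
  have hp2 : p % 2 = 1 := Nat.odd_iff.mp hodd
  unfold u
  split_ifs with h <;> omega

lemma u_sq (p : ℕ) (hodd : Odd p) (y : ℕ) (h2 : y ≤ p) :
    (4 : ZMod p) * (u p y : ZMod p)^2 = (y : ZMod p)^2 := by
  have hp2 : p % 2 = 1 := Nat.odd_iff.mp hodd
  unfold u
  split_ifs with h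
  · have key : ((2 * (y / 2) : ℕ) : ZMod p) = ((y : ℕ) : ZMod p) := by
      congr 1; omega
    push_cast at key
    linear_combination (2 * ((y / 2 : ℕ) : ZMod p) + (y : ZMod p)) * key
  · have key : ((2 * ((p - y) / 2) : ℕ) : ZMod p) = ((p - y : ℕ) : ZMod p) := by
      congr 1; omega
    have key2 : ((p - y : ℕ) : ZMod p) = -(y : ZMod p) := by
      rw [Nat.cast_sub h2, ZMod.natCast_self]; ring
    rw [key2] at key
    push_cast at key
    linear_combination (2 * (((p - y) / 2 : ℕ) : ZMod p) - (y : ZMod p)) * key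

lemma iter_sq (p : ℕ) (hp3 : 3 ≤ p) (hodd : Odd p) (n y : ℕ)
    (h1 : 1 ≤ y) (h2 : y ≤ (p - 1) / 2) :
    (4 : ZMod p)^n * (((u p)^[n] y : ℕ) : ZMod p)^2 = (y : ZMod p)^2 ∧
    1 ≤ (u p)^[n] y ∧ (u p)^[n] y ≤ (p - 1) / 2 := by
  induction n with
  | zero => simpa using ⟨h1, h2⟩
  | succ n ih =>
    obtain ⟨hsq, ha, hb⟩ := ih
    rw [Function.iterate_succ_apply']
    have hr := u_range p hp3 hodd _ ha (by omega)
    refine ⟨?_, hr.1, hr.2⟩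
    have hs := u_sq p hodd ((u p)^[n] y) (by omega)
    linear_combination (4 : ZMod p)^n * hs + hsq

theorem stmt_15 (p : ℕ) (hp : p.Prime) (hodd : Odd p)
    (L : ℕ) (hL : L = orderOf (4 : ZMod p))
    (x : ℕ) (hx1 : 1 ≤ x) (hx2 : x ≤ p - 1) :
    (u p)^[L + 1] x = u p x := by
  haveI := Fact.mk hp
  have hp3 : 3 ≤ p := by
    have := hp.two_le
    have := Nat.odd_iff.mp hodd
    omega
  set b := u p x with hb
  have hbrange := u_range p hp3 hodd x hx1 hx2
  rw [Function.iterate_succ_apply]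
  obtain ⟨hsq, ha1, ha2⟩ := iter_sq p hp3 hodd L b hbrange.1 hbrange.2
  have h4 : (4 : ZMod p)^L = 1 := by rw [hL]; exact pow_orderOf_eq_one _
  rw [h4, one_mul] at hsq
  set a := (u p)^[L] b with haa
  have hfac : (((a : ℕ) : ZMod p) - (b : ℕ)) * (((a : ℕ) : ZMod p) + (b : ℕ)) = 0 := by
    linear_combination hsq
  rcases mul_eq_zero.mp hfac with hc | hc
  · -- a ≡ b mod p, both < p
    have heq : ((a : ℕ) : ZMod p) = ((b : ℕ) : ZMod p) := by linear_combination hc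
    have h1 : a < p := by omega
    have h2 : b < p := by omega
    calc a = ((a : ℕ) : ZMod p).val := (ZMod.val_cast_of_lt h1).symm
    _ = ((b : ℕ) : ZMod p).val := by rw [heq]
    _ = b := ZMod.val_cast_of_lt h2
  · -- a + b ≡ 0 mod p, impossible
    exfalso
    have : (((a + b : ℕ) : ZMod p)) = 0 := by push_cast; linear_combination hc
    have hdvd : p ∣ a + b := (ZMod.natCast_eq_zero_iff _ _).mp this
    have := Nat.le_of_dvd (by omega) hdvd
    omega
end

section
/- Let p be an odd prime, q = (p-1)/2, and let L_p = ord_p(4) be the multiplicative order of 4 modulo p. The forward orbits {x, u(x), u^[2](x), ...} of the elements of {1,2,...,q} under iteration of u partition {1,2,...,q} into exactly c_p = (p-1)/(2·L_p) orbits, each of cardinality L_p. -/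
namespace Stmt16

variable {p q : ℕ}

lemma u_mem (hpq : p = 2 * q + 1) {x : ℕ} (h1 : 1 ≤ x) (h2 : x ≤ q) :
    1 ≤ u p x ∧ u p x ≤ q := by
  unfold u; split <;> omega

lemma iter_mem (hpq : p = 2 * q + 1) {x : ℕ} (h1 : 1 ≤ x) (h2 : x ≤ q) (n : ℕ) :
    1 ≤ (u p)^[n] x ∧ (u p)^[n] x ≤ q := by
  induction n with
  | zero => exact ⟨h1, h2⟩
  | succ n ih =>
    rw [Function.iterate_succ_apply']
    exact u_mem hpq ih.1 ih.2

lemma two_ne (hp : p.Prime) (hodd : Odd p) : (2 : ZMod p) ≠ 0 := by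
  haveI := Fact.mk hp
  have h3 : 3 ≤ p := by
    obtain ⟨k, hk⟩ := hodd; have := hp.two_le; omega
  have : ((2 : ℕ) : ZMod p) ≠ 0 := by
    rw [Ne, ZMod.natCast_eq_zero_iff]
    intro h
    have := Nat.le_of_dvd (by norm_num) h
    omega
  simpa using this

lemma u_cast (hp : p.Prime) (hodd : Odd p) {x : ℕ} (h1 : 1 ≤ x) (h2 : x ≤ p - 1) :
    ((u p x : ℕ) : ZMod p) = (x : ZMod p) * (2 : ZMod p)⁻¹ ∨
    ((u p x : ℕ) : ZMod p) = -((x : ZMod p) * (2 : ZMod p)⁻¹) := by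
  haveI := Fact.mk hp
  have h2ne := two_ne hp hodd
  have hpodd : p % 2 = 1 := by obtain ⟨k, hk⟩ := hodd; omega
  have h3 : 3 ≤ p := by have := hp.two_le; omega
  by_cases he : x % 2 = 0
  · left
    have key : 2 * (x / 2) = x := by omega
    have hu : u p x = x / 2 := by unfold u; simp [he]
    have := congrArg (Nat.cast : ℕ → ZMod p) key
    push_cast at this
    rw [hu, eq_mul_inv_iff_mul_eq₀ h2ne]
    linear_combination this
  · right
    have key : 2 * ((p - x) / 2) = p - x := by omega
    have hu : u p x = (p - x) / 2 := by unfold u; simp [he]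
    have hc : ((p - x : ℕ) : ZMod p) = -(x : ZMod p) := by
      rw [Nat.cast_sub (by omega)]
      simp [ZMod.natCast_self]
    have := congrArg (Nat.cast : ℕ → ZMod p) key
    rw [hc] at this
    push_cast at this
    rw [hu, eq_comm, neg_eq_iff_eq_neg, eq_comm, eq_mul_inv_iff_mul_eq₀ h2ne]
    linear_combination -this

lemma iter_cast (hp : p.Prime) (hodd : Odd p) (hpq : p = 2 * q + 1)
    {x : ℕ} (h1 : 1 ≤ x) (h2 : x ≤ q) (n : ℕ) :
    ∃ ε : ZMod p, (ε = 1 ∨ ε = -1) ∧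
      (((u p)^[n] x : ℕ) : ZMod p) = ε * x * ((2 : ZMod p)⁻¹) ^ n := by
  induction n with
  | zero => exact ⟨1, Or.inl rfl, by simp⟩
  | succ n ih =>
    obtain ⟨ε, hε, hcast⟩ := ih
    have hmem := iter_mem hpq h1 h2 n
    have hstep := u_cast hp hodd hmem.1 (by omega : (u p)^[n] x ≤ p - 1)
    rw [Function.iterate_succ_apply']
    rcases hstep with h | h
    · exact ⟨ε, hε, by rw [h, hcast]; ring⟩
    · refine ⟨-ε, by rcases hε with h' | h' <;> simp [h'], ?_⟩
      rw [h, hcast]; ring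

lemma cast_inj_pm (hp : p.Prime) (hpq : p = 2 * q + 1) {a b : ℕ}
    (ha1 : 1 ≤ a) (ha2 : a ≤ q) (hb1 : 1 ≤ b) (hb2 : b ≤ q)
    (h : (a : ZMod p) = b ∨ (a : ZMod p) = -b) : a = b := by
  haveI := Fact.mk hp
  rcases h with h | h
  · have := congrArg ZMod.val h
    rwa [ZMod.val_cast_of_lt (by omega), ZMod.val_cast_of_lt (by omega)] at this
  · exfalso
    have h0 : ((a + b : ℕ) : ZMod p) = 0 := by push_cast [h]; ring
    rw [ZMod.natCast_eq_zero_iff] at h0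
    have := Nat.le_of_dvd (by omega) h0
    omega

lemma iter_eq_self_iff (hp : p.Prime) (hodd : Odd p) (hpq : p = 2 * q + 1)
    {x : ℕ} (h1 : 1 ≤ x) (h2 : x ≤ q) (n : ℕ) :
    (u p)^[n] x = x ↔ orderOf (4 : ZMod p) ∣ n := by
  haveI := Fact.mk hp
  have h2ne := two_ne hp hodd
  have hxne : (x : ZMod p) ≠ 0 := by
    have : ¬ (p ∣ x) := fun hd => by have := Nat.le_of_dvd (by omega) hd; omega
    rw [Ne, ZMod.natCast_eq_zero_iff]; exact this
  have h4eq : (4 : ZMod p) = 2 * 2 := by norm_num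
  obtain ⟨ε, hε, hcast⟩ := iter_cast hp hodd hpq h1 h2 n
  have hinv : ((2 : ZMod p)⁻¹) ^ n * (2 : ZMod p) ^ n = 1 := by
    rw [← mul_pow, inv_mul_cancel₀ h2ne, one_pow]
  constructor
  · intro h
    rw [h] at hcast
    have key : (x : ZMod p) * (2 : ZMod p) ^ n = x * ε := by
      calc (x : ZMod p) * 2 ^ n = (ε * x * (2⁻¹) ^ n) * 2 ^ n := by rw [← hcast]
        _ = ε * x * ((2⁻¹) ^ n * 2 ^ n) := by ring
        _ = x * ε := by rw [hinv]; ring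
    have h2n := mul_left_cancel₀ hxne key
    apply orderOf_dvd_of_pow_eq_one
    rw [h4eq, mul_pow, h2n]
    rcases hε with h' | h' <;> simp [h']
  · intro h
    have h4 : (4 : ZMod p) ^ n = 1 := orderOf_dvd_iff_pow_eq_one.mp h
    have h2n : (2 : ZMod p) ^ n = 1 ∨ (2 : ZMod p) ^ n = -1 := by
      rw [← mul_self_eq_one_iff, ← mul_pow, ← h4eq]
      exact h4
    have hinv2 : ((2 : ZMod p)⁻¹) ^ n = 1 ∨ ((2 : ZMod p)⁻¹) ^ n = -1 := by
      rw [inv_pow]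
      rcases h2n with h' | h'
      · left; rw [h']; simp
      · right; rw [h']; simp [inv_neg_one]
    have hmem := iter_mem hpq h1 h2 n
    apply cast_inj_pm hp hpq hmem.1 hmem.2 h1 h2
    rcases hε with he | he <;> rcases hinv2 with hi | hi <;>
      rw [he, hi] at hcast <;> [left; right; right; left] <;>
      rw [hcast] <;> ring


end Stmt16
theorem stmt_16 (p : ℕ) (hp : p.Prime) (hodd : Odd p)
    (q : ℕ) (hq : q = (p - 1) / 2)
    (L : ℕ) (hL : L = orderOf (4 : ZMod p))
    (c : ℕ) (hc : c = (p - 1) / (2 * L))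
    (orbits : Set (Set ℕ))
    (horbits : orbits =
      {s | ∃ x, 1 ≤ x ∧ x ≤ q ∧ s = {y | ∃ n : ℕ, (u p)^[n] x = y}}) :
    (⋃₀ orbits = Set.Icc 1 q) ∧
    (orbits.Pairwise Disjoint) ∧
    orbits.ncard = c ∧
    (∀ s ∈ orbits, s.ncard = L) := by
  haveI := Fact.mk hp
  have hpodd : p % 2 = 1 := by obtain ⟨k, hk⟩ := hodd; omega
  have h3 : 3 ≤ p := by have := hp.two_le; omega
  have hpq : p = 2 * q + 1 := by omega
  have hq1 : 1 ≤ q := by omega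
  have h4ne : (4 : ZMod p) ≠ 0 := by
    have : ((4 : ℕ) : ZMod p) ≠ 0 := by
      rw [Ne, ZMod.natCast_eq_zero_iff]
      intro hd
      have hd2 : p ∣ 2 := hp.dvd_of_dvd_pow (n := 2) (by norm_num; exact hd)
      have := Nat.le_of_dvd (by norm_num) hd2
      omega
    simpa using this
  have hL0 : 0 < L := by
    rw [hL, orderOf_pos_iff, isOfFinOrder_iff_pow_eq_one]
    exact ⟨p - 1, by omega, ZMod.pow_card_sub_one_eq_one h4ne⟩
  have key : ∀ x, 1 ≤ x → x ≤ q → ∀ n, ((u p)^[n] x = x ↔ L ∣ n) := by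
    intro x h1 h2 n
    rw [hL]; exact Stmt16.iter_eq_self_iff hp hodd hpq h1 h2 n
  have reduce : ∀ x, 1 ≤ x → x ≤ q → ∀ n, (u p)^[n] x = (u p)^[n % L] x := by
    intro x h1 h2 n
    conv_lhs => rw [← Nat.mod_add_div n L]
    rw [Function.iterate_add_apply, (key x h1 h2 (L * (n / L))).mpr ⟨n / L, rfl⟩]
  set F : ℕ → Finset ℕ := fun x => (Finset.range L).image (fun n => (u p)^[n] x) with hF
  have sorb_eq : ∀ x, 1 ≤ x → x ≤ q →
      {y | ∃ n : ℕ, (u p)^[n] x = y} = ↑(F x) := by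
    intro x h1 h2
    ext y
    simp only [Set.mem_setOf_eq, hF, Finset.coe_image, Finset.coe_range, Set.mem_image,
      Set.mem_Iio]
    constructor
    · rintro ⟨n, rfl⟩
      exact ⟨n % L, Nat.mod_lt _ hL0, (reduce x h1 h2 n).symm⟩
    · rintro ⟨n, _, rfl⟩; exact ⟨n, rfl⟩
  have inj : ∀ x, 1 ≤ x → x ≤ q → ∀ a b, a < L → b < L →
      (u p)^[a] x = (u p)^[b] x → a = b := by
    have aux : ∀ x, 1 ≤ x → x ≤ q → ∀ a b, a ≤ b → b < L →
        (u p)^[a] x = (u p)^[b] x → b ≤ a := by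
      intro x h1 h2 a b hab hbL heq
      have h5 : (u p)^[L - b + a] x = x := by
        have h6 : (u p)^[L - b] ((u p)^[a] x) = (u p)^[L - b] ((u p)^[b] x) := by rw [heq]
        rw [← Function.iterate_add_apply, ← Function.iterate_add_apply] at h6
        rw [h6, (by omega : L - b + b = L)]
        exact (key x h1 h2 L).mpr dvd_rfl
      have hdvd := (key x h1 h2 _).mp h5
      have := Nat.le_of_dvd (by omega) hdvd
      omega
    intro x h1 h2 a b ha hb heq
    rcases le_total a b with h | h
    · have := aux x h1 h2 a b h hb heq; omega
    · have := aux x h1 h2 b a h ha heq.symm; omega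
  have F_card : ∀ x, 1 ≤ x → x ≤ q → (F x).card = L := by
    intro x h1 h2
    rw [hF]
    rw [Finset.card_image_of_injOn, Finset.card_range]
    intro a ha b hb heq
    exact inj x h1 h2 a b (Finset.mem_range.mp ha) (Finset.mem_range.mp hb) heq
  have F_mem_self : ∀ x, x ∈ F x := by
    intro x
    simp only [hF, Finset.mem_image]
    exact ⟨0, Finset.mem_range.mpr hL0, rfl⟩
  have F_sub : ∀ x, 1 ≤ x → x ≤ q → F x ⊆ Finset.Icc 1 q := by
    intro x h1 h2 z hz
    simp only [hF, Finset.mem_image, Finset.mem_range] at hz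
    obtain ⟨n, _, rfl⟩ := hz
    exact Finset.mem_Icc.mpr (Stmt16.iter_mem hpq h1 h2 n)
  have back : ∀ v w, 1 ≤ v → v ≤ q → w ∈ {y | ∃ n : ℕ, (u p)^[n] v = y} →
      v ∈ {y | ∃ n : ℕ, (u p)^[n] w = y} ∧
      {y | ∃ n : ℕ, (u p)^[n] w = y} ⊆ {y | ∃ n : ℕ, (u p)^[n] v = y} := by
    rintro v w h1 h2 ⟨j, rfl⟩
    constructor
    · refine ⟨L - j % L, ?_⟩
      rw [reduce v h1 h2 j, ← Function.iterate_add_apply,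
        (by have := Nat.mod_lt j hL0; omega : L - j % L + j % L = L)]
      exact (key v h1 h2 L).mpr dvd_rfl
    · rintro a ⟨k, rfl⟩
      exact ⟨k + j, by rw [Function.iterate_add_apply]⟩
  have inter : ∀ x y, 1 ≤ x → x ≤ q → 1 ≤ y → y ≤ q →
      (∃ z, z ∈ {w | ∃ n : ℕ, (u p)^[n] x = w} ∧ z ∈ {w | ∃ n : ℕ, (u p)^[n] y = w}) →
      {w | ∃ n : ℕ, (u p)^[n] x = w} = {w | ∃ n : ℕ, (u p)^[n] y = w} := by
    rintro x y hx1 hx2 hy1 hy2 ⟨z, hzx, hzy⟩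
    obtain ⟨hxz, hzsubx⟩ := back x z hx1 hx2 hzx
    obtain ⟨hyz, hzsuby⟩ := back y z hy1 hy2 hzy
    apply Set.Subset.antisymm
    · exact (back y x hy1 hy2 (hzsuby hxz)).2
    · exact (back x y hx1 hx2 (hzsubx hyz)).2
  set O : Finset (Finset ℕ) := (Finset.Icc 1 q).image F with hO
  have orbdesc : ∀ s, s ∈ orbits ↔
      ∃ x, 1 ≤ x ∧ x ≤ q ∧ s = {y | ∃ n : ℕ, (u p)^[n] x = y} := by
    intro s; rw [horbits]; rfl
  have goal1 : ⋃₀ orbits = Set.Icc 1 q := by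
    ext z
    simp only [Set.mem_sUnion, Set.mem_Icc]
    constructor
    · rintro ⟨s, hs, hzs⟩
      obtain ⟨x, h1, h2, rfl⟩ := (orbdesc s).mp hs
      obtain ⟨n, rfl⟩ := hzs
      exact Stmt16.iter_mem hpq h1 h2 n
    · intro hz
      exact ⟨_, (orbdesc _).mpr ⟨z, hz.1, hz.2, rfl⟩, ⟨0, rfl⟩⟩
  have goal2 : orbits.Pairwise Disjoint := by
    intro s hs t ht hst
    obtain ⟨x, hx1, hx2, rfl⟩ := (orbdesc s).mp hs
    obtain ⟨y, hy1, hy2, rfl⟩ := (orbdesc t).mp ht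
    rw [Set.disjoint_left]
    intro z hzs hzt
    exact hst (inter x y hx1 hx2 hy1 hy2 ⟨z, hzs, hzt⟩)
  have orbits_eq : orbits = (fun t : Finset ℕ => (↑t : Set ℕ)) '' ↑O := by
    ext s
    rw [orbdesc]
    simp only [Set.mem_image, Finset.mem_coe, hO, Finset.mem_image, Finset.mem_Icc]
    constructor
    · rintro ⟨x, h1, h2, rfl⟩
      exact ⟨F x, ⟨x, ⟨h1, h2⟩, rfl⟩, (sorb_eq x h1 h2).symm⟩
    · rintro ⟨t, ⟨x, ⟨h1, h2⟩, rfl⟩, rfl⟩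
      exact ⟨x, h1, h2, (sorb_eq x h1 h2).symm⟩
  have Odisj : ∀ s ∈ O, ∀ t ∈ O, s ≠ t → Disjoint s t := by
    intro s hs t ht hst
    simp only [hO, Finset.mem_image, Finset.mem_Icc] at hs ht
    obtain ⟨x, ⟨hx1, hx2⟩, rfl⟩ := hs
    obtain ⟨y, ⟨hy1, hy2⟩, rfl⟩ := ht
    rw [Finset.disjoint_left]
    intro z hzs hzt
    apply hst
    apply Finset.coe_injective
    rw [← sorb_eq x hx1 hx2, ← sorb_eq y hy1 hy2]
    refine inter x y hx1 hx2 hy1 hy2 ⟨z, ?_, ?_⟩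
    · rw [sorb_eq x hx1 hx2]; exact hzs
    · rw [sorb_eq y hy1 hy2]; exact hzt
  have biU : O.biUnion id = Finset.Icc 1 q := by
    apply Finset.Subset.antisymm
    · intro z hz
      simp only [Finset.mem_biUnion, id] at hz
      obtain ⟨s, hs, hzs⟩ := hz
      simp only [hO, Finset.mem_image, Finset.mem_Icc] at hs
      obtain ⟨x, ⟨h1, h2⟩, rfl⟩ := hs
      exact F_sub x h1 h2 hzs
    · intro z hz
      rw [Finset.mem_biUnion]
      refine ⟨F z, ?_, F_mem_self z⟩
      simp only [hO, Finset.mem_image]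
      exact ⟨z, hz, rfl⟩
  have hcount : q = O.card * L := by
    have h1 : (Finset.Icc 1 q).card = q := by rw [Nat.card_Icc]; omega
    rw [← h1, ← biU]
    calc (O.biUnion id).card = ∑ s ∈ O, (id s).card := Finset.card_biUnion Odisj
      _ = ∑ _s ∈ O, L := Finset.sum_congr rfl (fun s hs => by
            simp only [hO, Finset.mem_image, Finset.mem_Icc] at hs
            obtain ⟨x, ⟨h1, h2⟩, rfl⟩ := hs
            exact F_card x h1 h2)
      _ = O.card * L := by rw [Finset.sum_const, smul_eq_mul]
  have goal3 : orbits.ncard = c := by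
    rw [orbits_eq, Set.ncard_image_of_injective _ Finset.coe_injective,
      Set.ncard_coe_finset]
    have hcq : c = q / L := by rw [hc, hq, Nat.div_div_eq_div_mul]
    rw [hcq, hcount, Nat.mul_div_cancel _ hL0]
  have goal4 : ∀ s ∈ orbits, s.ncard = L := by
    intro s hs
    obtain ⟨x, h1, h2, rfl⟩ := (orbdesc s).mp hs
    rw [sorb_eq x h1 h2, Set.ncard_coe_finset]
    exact F_card x h1 h2
  exact ⟨goal1, goal2, goal3, goal4⟩
end
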